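/- If Z ~ N(0, σ²) with σ² ≤ 1, then for every α ∈ [0,1], P(2Φ(−|Z|) ≤ α) ≤ α, i.e., the p-value 2Φ(−|Z|) is super-uniform. -/

import Mathlib

/-!
Write `p(x) = 2 Φ(-|x|)` and `Z = σ X` with `X` standard normal and `σ ≤ 1`. Since `|σ X| ≤ |X|`
and `p` decreases in `|x|`, the event `p(Z) ≤ α` is contained in `p(X) ≤ α`. Choosing `q` with
`Φ(q) = α / 2`, the latter event is `{X ≤ q} ∪ {X ≥ -q}`, of probability `2 Φ(q) = α` by symmetry.
-/

open MeasureTheory Set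
open scoped NNReal

namespace ProbabilityTheory

lemma strictMono_cdf {ν : Measure ℝ} [IsProbabilityMeasure ν] (h : volume ≪ ν) :
    StrictMono (cdf ν) := by
  intro a b hab
  have hpos : ν (Ioc a b) ≠ 0 := fun h0 => hab.not_ge (by simpa using h h0)
  rwa [← measure_cdf ν, StieltjesFunction.measure_Ioc, ne_eq, ENNReal.ofReal_eq_zero, not_le,
    sub_pos] at hpos

lemma continuous_cdf (ν : Measure ℝ) [IsProbabilityMeasure ν] [NullSingletonClass ν] :
    Continuous (cdf ν) := by
  refine continuous_iff_continuousAt.2 fun x => continuousAt_iff_continuous_left'_right'.2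
    ⟨?_, ((cdf ν).right_continuous x).mono Ioi_subset_Ici_self⟩
  have hx := measure_singleton (μ := ν) x
  rw [← measure_cdf ν, StieltjesFunction.measure_singleton, ENNReal.ofReal_eq_zero,
    sub_nonpos] at hx
  exact (monotone_cdf ν).continuousWithinAt_Iio_iff_leftLim_eq.2
    (le_antisymm ((monotone_cdf ν).leftLim_le le_rfl) hx)

lemma exists_cdf_eq {ν : Measure ℝ} (hc : Continuous (cdf ν)) {p : ℝ} (hp : p ∈ Ioo 0 1) :
    ∃ q, cdf ν q = p :=
  mem_range_of_exists_le_of_exists_ge hc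
    ((tendsto_cdf_atBot ν).eventually_le_const hp.1).exists
    ((tendsto_cdf_atTop ν).eventually_const_le hp.2).exists

lemma measure_Ici_neg_of_map_neg {ν : Measure ℝ} [IsProbabilityMeasure ν]
    (hν : ν.map Neg.neg = ν) (q : ℝ) : ν (Ici (-q)) = ENNReal.ofReal (cdf ν q) := by
  nth_rw 1 [ofReal_cdf, ← hν]
  rw [Measure.map_apply measurable_neg measurableSet_Ici, neg_preimage, neg_Ici, neg_neg]

lemma measure_neg_abs_le_le_two_mul_cdf {ν : Measure ℝ} [IsProbabilityMeasure ν]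
    (hν : ν.map Neg.neg = ν) (q : ℝ) :
    ν {x | -|x| ≤ q} ≤ ENNReal.ofReal (2 * cdf ν q) := by
  have hsub : {x : ℝ | -|x| ≤ q} ⊆ Iic q ∪ Ici (-q) := fun x (hx : -|x| ≤ q) => by
    rcases le_total 0 x with h | h
    · exact Or.inr (show -q ≤ x by rw [abs_of_nonneg h] at hx; linarith)
    · exact Or.inl (show x ≤ q by rw [abs_of_nonpos h] at hx; linarith)
  calc ν {x | -|x| ≤ q} ≤ ν (Iic q) + ν (Ici (-q)) :=
        (measure_mono hsub).trans (measure_union_le _ _)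
    _ = ENNReal.ofReal (2 * cdf ν q) := by
      rw [measure_Ici_neg_of_map_neg hν, ← ofReal_cdf, two_mul,
        ENNReal.ofReal_add (cdf_nonneg ν q) (cdf_nonneg ν q)]

noncomputable def twoSidedPValue (ν : Measure ℝ) (x : ℝ) : ℝ := 2 * cdf ν (-|x|)

lemma twoSidedPValue_le_of_abs_le (ν : Measure ℝ) {x y : ℝ} (h : |x| ≤ |y|) :
    twoSidedPValue ν y ≤ twoSidedPValue ν x := by
  unfold twoSidedPValue
  gcongr

lemma measurableSet_twoSidedPValue_le (ν : Measure ℝ) (α : ℝ) :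
    MeasurableSet {x | twoSidedPValue ν x ≤ α} :=
  measurableSet_le (((monotone_cdf ν).measurable.comp (by fun_prop)).const_mul 2) measurable_const

lemma measure_twoSidedPValue_le {ν : Measure ℝ} [IsProbabilityMeasure ν]
    (hν : ν.map Neg.neg = ν) (hc : Continuous (cdf ν)) (hm : StrictMono (cdf ν)) (α : ℝ) :
    ν {x | twoSidedPValue ν x ≤ α} ≤ ENNReal.ofReal α := by
  rcases le_or_gt α 0 with hα0 | hα0
  · have hempty : {x | twoSidedPValue ν x ≤ α} = ∅ :=
      eq_empty_of_forall_notMem fun x (hx : 2 * cdf ν (-|x|) ≤ α) => by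
        have := (cdf_nonneg ν (-|x| - 1)).trans_lt (hm (sub_one_lt _))
        linarith
    simp [hempty]
  rcases lt_or_ge α 2 with hα2 | hα2
  · obtain ⟨q, hq⟩ := exists_cdf_eq hc (p := α / 2) ⟨by linarith, by linarith⟩
    calc ν {x | twoSidedPValue ν x ≤ α} ≤ ν {x | -|x| ≤ q} :=
          measure_mono fun x (hx : 2 * cdf ν (-|x|) ≤ α) => hm.le_iff_le.1 (by linarith)
      _ ≤ ENNReal.ofReal α := by simpa [hq, mul_div_cancel₀] using measure_neg_abs_le_le_two_mul_cdf hν q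
  · exact prob_le_one.trans (ENNReal.one_le_ofReal.2 (by linarith))

lemma map_const_mul_twoSidedPValue_le (ρ ν : Measure ℝ) {c : ℝ} (hc : |c| ≤ 1) (α : ℝ) :
    ρ.map (c * ·) {x | twoSidedPValue ν x ≤ α} ≤ ρ {x | twoSidedPValue ν x ≤ α} := by
  rw [Measure.map_apply (measurable_const_mul c) (measurableSet_twoSidedPValue_le ν α)]
  refine measure_mono fun x (hx : twoSidedPValue ν (c * x) ≤ α) =>
    (twoSidedPValue_le_of_abs_le ν ?_).trans hx
  rw [abs_mul]
  exact mul_le_of_le_one_left (abs_nonneg x) hc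

lemma gaussianReal_zero_map_neg (v : ℝ≥0) :
    (gaussianReal 0 v).map Neg.neg = gaussianReal 0 v := by
  simpa using gaussianReal_map_neg (μ := 0) (v := v)

lemma gaussianReal_zero_eq_map_sqrt_mul (v : ℝ≥0) :
    gaussianReal 0 v = (gaussianReal 0 1).map (√(v : ℝ) * ·) := by
  rw [gaussianReal_map_const_mul]
  congr
  · simp
  · ext; simp

end ProbabilityTheory

open ProbabilityTheory

theorem pvalue_superuniform_of_underdispersed_general
    {Ω : Type*} {mΩ : MeasurableSpace Ω} (μ : Measure Ω) [IsProbabilityMeasure μ]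
    (Z : Ω → ℝ) (σ2 : ℝ≥0)
    (hσ2 : σ2 ≤ 1) (hZ : μ.map Z = gaussianReal 0 σ2) :
    ∀ α ∈ Set.Icc (0 : ℝ) 1,
      μ {ω | 2 * cdf (gaussianReal 0 1) (-|Z ω|) ≤ α} ≤ ENNReal.ofReal α := by
  intro α _
  have hZmeas : AEMeasurable Z μ := .of_map_ne_zero (by simp [hZ, NeZero.ne])
  have hσ : |√(σ2 : ℝ)| ≤ 1 := by
    rw [abs_of_nonneg (Real.sqrt_nonneg _), Real.sqrt_le_one]
    exact_mod_cast hσ2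
  calc μ {ω | 2 * cdf (gaussianReal 0 1) (-|Z ω|) ≤ α}
      = (gaussianReal 0 1).map (√(σ2 : ℝ) * ·)
          {x | twoSidedPValue (gaussianReal 0 1) x ≤ α} := by
        rw [← gaussianReal_zero_eq_map_sqrt_mul, ← hZ,
          Measure.map_apply_of_aemeasurable hZmeas (measurableSet_twoSidedPValue_le _ α)]
        rfl
    _ ≤ gaussianReal 0 1 {x | twoSidedPValue (gaussianReal 0 1) x ≤ α} :=
        map_const_mul_twoSidedPValue_le _ _ hσ α
    _ ≤ ENNReal.ofReal α :=
        have := nullSingletonClass_gaussianReal (μ := 0) one_ne_zero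
        measure_twoSidedPValue_le (gaussianReal_zero_map_neg 1) (continuous_cdf _)
          (strictMono_cdf (gaussianReal_absolutelyContinuous' 0 one_ne_zero)) α

/-- If `Z ~ N(0, σ²)` with `0 < σ² ≤ 1`, then the p-value `2 Φ(-|Z|)` is
super-uniform: `P(2 Φ(-|Z|) ≤ α) ≤ α` for every `α ∈ [0,1]`. -/
theorem pvalue_superuniform_of_underdispersed
    {Ω : Type*} {mΩ : MeasurableSpace Ω} (μ : Measure Ω) [IsProbabilityMeasure μ]
    (Z : Ω → ℝ) (hZmeas : Measurable Z) (σ2 : ℝ≥0) (hσ2pos : 0 < σ2)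
    (hσ2 : σ2 ≤ 1) (hZ : μ.map Z = gaussianReal 0 σ2) :
    ∀ α ∈ Set.Icc (0 : ℝ) 1,
      μ {ω | 2 * cdf (gaussianReal 0 1) (-|Z ω|) ≤ α} ≤ ENNReal.ofReal α :=
  pvalue_superuniform_of_underdispersed_general (mΩ := mΩ) μ Z σ2 hσ2 hZ
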